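/- arXiv:math/0702258 — 9 statements merged into one kernel-verified Lean document; each statement's English description precedes it below -/
import Mathlib

section
/- Let W be a finite-dimensional real vector space, L ⊆ W × W* a linear subspace with dim L = dim W, and V ⊆ W a subspace such that (V × V⁰) ∩ L = {0}. Then W is the internal direct sum of V and the horizontal space H = {w ∈ W : there exists ξ ∈ V⁰ with (w,ξ) ∈ L}. -/
/-- The horizontal space of a subspace `L ⊆ W × W*` relative to a subspace `V ⊆ W`:
`H = {w ∈ W : ∃ ξ ∈ V⁰, (w, ξ) ∈ L}`. -/
def horizontalSpace {W : Type*} [AddCommGroup W] [Module ℝ W]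
    (L : Submodule ℝ (W × Module.Dual ℝ W)) (V : Submodule ℝ W) :
    Submodule ℝ W where
  carrier := {w | ∃ ξ ∈ V.dualAnnihilator, (w, ξ) ∈ L}
  add_mem' := by
    rintro a b ⟨ξ, hξ, hL⟩ ⟨η, hη, hL'⟩
    exact ⟨ξ + η, add_mem hξ hη, L.add_mem hL hL'⟩
  zero_mem' := ⟨0, Submodule.zero_mem _, L.zero_mem⟩
  smul_mem' := by
    rintro c a ⟨ξ, hξ, hL⟩
    exact ⟨c • ξ, Submodule.smul_mem _ c hξ, L.smul_mem c hL⟩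

/-- Auxiliary equivalence between `p.prod q` and `p × q`. -/
def prodSubmoduleEquiv {R M N : Type*} [CommRing R] [AddCommGroup M] [AddCommGroup N]
    [Module R M] [Module R N] (p : Submodule R M) (q : Submodule R N) :
    (p.prod q) ≃ₗ[R] p × q where
  toFun x := (⟨x.1.1, x.2.1⟩, ⟨x.1.2, x.2.2⟩)
  invFun x := ⟨(x.1.1, x.2.1), x.1.2, x.2.2⟩
  map_add' _ _ := rfl
  map_smul' _ _ := rfl
  left_inv _ := rfl
  right_inv _ := rfl

/-- if `L ⊆ W × W*` has `dim L = dim W` and `(V × V⁰) ∩ L = {0}`, then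
`W = V ⊕ H` where `H` is the horizontal space of `L`. -/
theorem stmt0 {W : Type*} [AddCommGroup W] [Module ℝ W] [FiniteDimensional ℝ W]
    (L : Submodule ℝ (W × Module.Dual ℝ W)) (V : Submodule ℝ W)
    (hdim : Module.finrank ℝ L = Module.finrank ℝ W)
    (hnd : V.prod V.dualAnnihilator ⊓ L = ⊥) :
    IsCompl V (horizontalSpace L V) := by
  classical
  set K := V.prod V.dualAnnihilator with hK
  have hKrank : Module.finrank ℝ K = Module.finrank ℝ W := by
    have h1 : Module.finrank ℝ K
        = Module.finrank ℝ V + Module.finrank ℝ V.dualAnnihilator := by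
      haveI : Module.Free ℝ ↥V.dualAnnihilator := Module.Free.of_divisionRing ℝ ↥V.dualAnnihilator
      haveI : Module.Free ℝ ↥V := Module.Free.of_divisionRing ℝ ↥V
      exact ((prodSubmoduleEquiv V V.dualAnnihilator).finrank_eq).trans Module.finrank_prod
    have h2 : Module.finrank ℝ V.dualAnnihilator = Module.finrank ℝ (W ⧸ V) :=
      (Subspace.quotEquivAnnihilator V).symm.finrank_eq
    have h3 := Submodule.finrank_quotient_add_finrank V
    omega
  have hTotal : Module.finrank ℝ (W × Module.Dual ℝ W) = 2 * Module.finrank ℝ W := by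
    rw [Module.finrank_prod, Subspace.dual_finrank_eq]; ring
  have hsup : K ⊔ L = ⊤ := by
    apply Submodule.eq_top_of_finrank_eq
    have := Submodule.finrank_sup_add_finrank_inf_eq K L
    rw [hnd] at this
    simp only [finrank_bot] at this
    omega
  constructor
  · rw [Submodule.disjoint_def]
    rintro w hwV ⟨ξ, hξ, hL⟩
    have hm : ((w, ξ) : W × Module.Dual ℝ W) ∈ K ⊓ L := ⟨⟨hwV, hξ⟩, hL⟩
    rw [hnd] at hm
    have := (Submodule.mem_bot ℝ).mp hm
    exact congrArg Prod.fst this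
  · rw [codisjoint_iff, eq_top_iff]
    intro w _
    have : ((w, 0) : W × Module.Dual ℝ W) ∈ K ⊔ L := hsup ▸ Submodule.mem_top
    obtain ⟨y, hy, z, hz, hyz⟩ := Submodule.mem_sup.mp this
    have hw1 : w = y.1 + z.1 := congrArg Prod.fst hyz.symm
    have hz2 : z.2 = -y.2 := by
      have h0 : y.2 + z.2 = 0 := congrArg Prod.snd hyz
      exact (neg_eq_of_add_eq_zero_right h0).symm
    have hzH : z.1 ∈ horizontalSpace L V := by
      refine ⟨z.2, ?_, by simpa using hz⟩
      rw [hz2]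
      exact neg_mem hy.2
    exact hw1 ▸ Submodule.add_mem_sup hy.1 hzH
end

section
/- Let W be a finite-dimensional real vector space, L ⊆ W × W* an isotropic subspace for the pairing ⟨(w₁,ξ₁),(w₂,ξ₂)⟩₊ = (1/2)(ξ₁(w₂) + ξ₂(w₁)) with dim L = dim W, and V ⊆ W a subspace such that (V × V⁰) ∩ L = {0}. Then the annihilator of the horizontal space H = {w ∈ W : there exists ξ ∈ V⁰ with (w,ξ) ∈ L} is H⁰ = {ξ ∈ W* : there exists w ∈ V with (w,ξ) ∈ L}. -/
set_option maxHeartbeats 800000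

/-- The natural symmetric pairing on `W × W*`:
`⟨(w₁,ξ₁),(w₂,ξ₂)⟩₊ = (1/2)(ξ₁(w₂) + ξ₂(w₁))`. -/
noncomputable def pairPlus {W : Type*} [AddCommGroup W] [Module ℝ W]
    (p q : W × Module.Dual ℝ W) : ℝ :=
  (1 / 2) * (p.2 q.1 + q.2 p.1)

/-- Auxiliary: the rank of the image of a submodule under a map that is injective on it. -/
lemma finrank_map_eq_of_injOn {M N : Type*} [AddCommGroup M] [Module ℝ M]
    [AddCommGroup N] [Module ℝ N] [FiniteDimensional ℝ M]
    (f : M →ₗ[ℝ] N) (P : Submodule ℝ M) (h : ∀ x ∈ P, f x = 0 → x = 0) :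
    Module.finrank ℝ (P.map f) = Module.finrank ℝ P := by
  have hrn := LinearMap.finrank_range_add_finrank_ker (f.domRestrict P)
  have hker : LinearMap.ker (f.domRestrict P) = ⊥ := by
    ext x
    simp only [LinearMap.mem_ker, LinearMap.domRestrict_apply, Submodule.mem_bot]
    constructor
    · intro hx; exact Subtype.ext (h x x.2 hx)
    · rintro rfl; simp
  rw [hker, finrank_bot ℝ _, add_zero, LinearMap.range_domRestrict] at hrn
  exact hrn

/-- Auxiliary: lower bound on the kernel of a restriction map, by rank-nullity. -/
lemma finrank_le_of_ker {M N : Type*} [AddCommGroup M] [Module ℝ M]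
    [AddCommGroup N] [Module ℝ N] [FiniteDimensional ℝ M] [FiniteDimensional ℝ N]
    (f : M →ₗ[ℝ] N) :
    Module.finrank ℝ M ≤ Module.finrank ℝ N + Module.finrank ℝ (LinearMap.ker f) := by
  have hrn := LinearMap.finrank_range_add_finrank_ker f
  have hrange : Module.finrank ℝ (LinearMap.range f) ≤ Module.finrank ℝ N :=
    Submodule.finrank_le _
  omega

/-- Auxiliary: rank of a submodule pulled back along the subtype inclusion. -/
lemma finrank_comap_subtype {M : Type*} [AddCommGroup M] [Module ℝ M]
    (L A : Submodule ℝ M) (hAL : A ≤ L) :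
    Module.finrank ℝ (A.comap L.subtype) = Module.finrank ℝ A :=
  (Submodule.comapSubtypeEquivOfLe hAL).finrank_eq

/-- Auxiliary: rank-nullity lower bound for the part of `L` killed by `f`. -/
lemma finrank_le_ker_restrict {M N : Type*} [AddCommGroup M] [Module ℝ M]
    [AddCommGroup N] [Module ℝ N] [FiniteDimensional ℝ M] [FiniteDimensional ℝ N]
    (L : Submodule ℝ M) (f : M →ₗ[ℝ] N) (A : Submodule ℝ M) (hAL : A ≤ L)
    (hA : ∀ x, x ∈ L → (f x = 0 ↔ x ∈ A)) :
    Module.finrank ℝ L ≤ Module.finrank ℝ N + Module.finrank ℝ A := by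
  have hker : LinearMap.ker (f.domRestrict L) = A.comap L.subtype := by
    ext x
    simp only [LinearMap.mem_ker, LinearMap.domRestrict_apply, Submodule.mem_comap,
      Submodule.coe_subtype]
    exact hA x x.2
  have h1 := finrank_le_of_ker (f.domRestrict L)
  rw [hker, finrank_comap_subtype L A hAL] at h1
  exact h1

/-- for an isotropic `L` with `dim L = dim W` and `(V × V⁰) ∩ L = {0}`,
the annihilator of the horizontal space is `H⁰ = {ξ ∈ W* : ∃ w ∈ V, (w,ξ) ∈ L}`. -/
theorem stmt6 {W : Type*} [AddCommGroup W] [Module ℝ W] [FiniteDimensional ℝ W]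
    (L : Submodule ℝ (W × Module.Dual ℝ W)) (V : Submodule ℝ W)
    (hiso : ∀ p ∈ L, ∀ q ∈ L, pairPlus p q = 0)
    (hdim : Module.finrank ℝ L = Module.finrank ℝ W)
    (hnd : V.prod V.dualAnnihilator ⊓ L = ⊥) :
    ∀ ξ : Module.Dual ℝ W,
      ξ ∈ (horizontalSpace L V).dualAnnihilator ↔ ∃ w ∈ V, (w, ξ) ∈ L := by
  classical
  set A : Submodule ℝ (W × Module.Dual ℝ W) :=
    ((⊤ : Submodule ℝ W).prod V.dualAnnihilator) ⊓ L with hAdef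
  set B : Submodule ℝ (W × Module.Dual ℝ W) :=
    (V.prod (⊤ : Submodule ℝ (Module.Dual ℝ W))) ⊓ L with hBdef
  have hAL : A ≤ L := inf_le_right
  have hBL : B ≤ L := inf_le_right
  have hAB : A ⊓ B = ⊥ := by
    rw [← hnd]
    ext p
    simp only [hAdef, hBdef, Submodule.mem_inf, Submodule.mem_prod, Submodule.mem_top,
      true_and, and_true]
    tauto
  -- H as the image of A under fst
  have hH : horizontalSpace L V = A.map (LinearMap.fst ℝ W (Module.Dual ℝ W)) := by
    ext w
    constructor
    · rintro ⟨η, hη, hL⟩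
      exact ⟨(w, η), ⟨⟨trivial, hη⟩, hL⟩, rfl⟩
    · rintro ⟨p, ⟨⟨-, hp2⟩, hpL⟩, rfl⟩
      exact ⟨p.2, hp2, by simpa using hpL⟩
  -- K as the image of B under snd
  set K : Submodule ℝ (Module.Dual ℝ W) :=
    B.map (LinearMap.snd ℝ W (Module.Dual ℝ W)) with hKdef
  have hKmem : ∀ ξ : Module.Dual ℝ W, ξ ∈ K ↔ ∃ w ∈ V, (w, ξ) ∈ L := by
    intro ξ
    constructor
    · rintro ⟨p, ⟨⟨hp1, -⟩, hpL⟩, rfl⟩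
      exact ⟨p.1, hp1, by simpa using hpL⟩
    · rintro ⟨w, hw, hL⟩
      exact ⟨(w, ξ), ⟨⟨hw, trivial⟩, hL⟩, rfl⟩
  -- finrank H = finrank A
  have hfrH : Module.finrank ℝ (horizontalSpace L V) = Module.finrank ℝ A := by
    rw [hH]
    apply finrank_map_eq_of_injOn
    rintro ⟨x1, x2⟩ ⟨⟨-, hx2⟩, hxL⟩ hx0
    simp only [LinearMap.fst_apply] at hx0
    subst hx0
    have : ((0 : W), x2) ∈ V.prod V.dualAnnihilator ⊓ L :=
      ⟨⟨V.zero_mem, hx2⟩, hxL⟩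
    rw [hnd, Submodule.mem_bot] at this
    exact this
  -- finrank K = finrank B
  have hfrK : Module.finrank ℝ K = Module.finrank ℝ B := by
    rw [hKdef]
    apply finrank_map_eq_of_injOn
    rintro ⟨x1, x2⟩ ⟨⟨hx1, -⟩, hxL⟩ hx0
    simp only [LinearMap.snd_apply] at hx0
    subst hx0
    have : (x1, (0 : Module.Dual ℝ W)) ∈ V.prod V.dualAnnihilator ⊓ L :=
      ⟨⟨hx1, Submodule.zero_mem _⟩, hxL⟩
    rw [hnd, Submodule.mem_bot] at this
    exact this
  have hAlow : Module.finrank ℝ L ≤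
      Module.finrank ℝ (Module.Dual ℝ V) + Module.finrank ℝ A := by
    refine finrank_le_ker_restrict L
      (V.subtype.dualMap ∘ₗ (LinearMap.snd ℝ W (Module.Dual ℝ W))) A hAL ?_
    intro x hx
    simp only [LinearMap.comp_apply, LinearMap.snd_apply, hAdef, Submodule.mem_inf,
      Submodule.mem_prod, Submodule.mem_top, true_and]
    constructor
    · intro h0
      refine ⟨?_, hx⟩
      rw [Submodule.mem_dualAnnihilator]
      intro w hw
      have := congrFun (congrArg DFunLike.coe h0) ⟨w, hw⟩
      simpa using this
    · rintro ⟨h2, -⟩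
      ext ⟨w, hw⟩
      rw [Submodule.mem_dualAnnihilator] at h2
      simpa using h2 w hw
  have hdualV : Module.finrank ℝ (Module.Dual ℝ V) = Module.finrank ℝ V :=
    Subspace.dual_finrank_eq (K := ℝ) (V := ↥V)
  rw [hdualV] at hAlow
  have hBlow : Module.finrank ℝ L ≤
      Module.finrank ℝ (W ⧸ V) + Module.finrank ℝ B := by
    refine finrank_le_ker_restrict L
      (V.mkQ ∘ₗ (LinearMap.fst ℝ W (Module.Dual ℝ W))) B hBL ?_
    intro x hx
    simp only [LinearMap.comp_apply, LinearMap.fst_apply, hBdef, Submodule.mem_inf,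
      Submodule.mem_prod, Submodule.mem_top, and_true, Submodule.mkQ_apply,
      Submodule.Quotient.mk_eq_zero]
    exact ⟨fun h => ⟨h, hx⟩, fun h => h.1⟩
  have hquot : Module.finrank ℝ (W ⧸ V) + Module.finrank ℝ V = Module.finrank ℝ W :=
    Submodule.finrank_quotient_add_finrank V
  -- upper bound: finrank A + finrank B ≤ n
  have hsum : Module.finrank ℝ A + Module.finrank ℝ B ≤ Module.finrank ℝ W := by
    have h1 := Submodule.finrank_sup_add_finrank_inf_eq A B
    rw [hAB, finrank_bot ℝ _, add_zero] at h1
    have h2 : Module.finrank ℝ ↥(A ⊔ B) ≤ Module.finrank ℝ L :=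
      Submodule.finrank_mono (sup_le hAL hBL)
    omega
  have hBeq : Module.finrank ℝ B = Module.finrank ℝ V := by omega
  have hAeq : Module.finrank ℝ A + Module.finrank ℝ V = Module.finrank ℝ W := by omega
  -- easy inclusion K ≤ H⁰
  have hKle : K ≤ (horizontalSpace L V).dualAnnihilator := by
    intro ξ hξ
    rw [hKmem] at hξ
    obtain ⟨w, hw, hwL⟩ := hξ
    rw [Submodule.mem_dualAnnihilator]
    rintro h ⟨η, hη, hηL⟩
    have h0 := hiso (h, η) hηL (w, ξ) hwL
    have hηw : η w = 0 := (Submodule.mem_dualAnnihilator η).mp hη w hw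
    simp only [pairPlus, hηw, zero_add] at h0
    have : ξ h = 0 := by
      field_simp at h0
      linarith
    exact this
  -- equality of dimensions
  have hann : Module.finrank ℝ (horizontalSpace L V) +
      Module.finrank ℝ (horizontalSpace L V).dualAnnihilator = Module.finrank ℝ W := by
    have h1 := Submodule.finrank_quotient_add_finrank (horizontalSpace L V)
    have h2 : Module.finrank ℝ (W ⧸ horizontalSpace L V)
        = Module.finrank ℝ (horizontalSpace L V).dualAnnihilator :=
      (Subspace.quotEquivAnnihilator (horizontalSpace L V)).finrank_eq
    omega
  have hfin : Module.finrank ℝ (horizontalSpace L V).dualAnnihilator ≤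
      Module.finrank ℝ K := by omega
  have hKeq : K = (horizontalSpace L V).dualAnnihilator :=
    Submodule.eq_of_le_of_finrank_le hKle hfin
  intro ξ
  rw [← hKeq, hKmem]
end

section
/- Let W be a finite-dimensional real vector space, L ⊆ W × W* an isotropic subspace for the pairing ⟨(w₁,ξ₁),(w₂,ξ₂)⟩₊ = (1/2)(ξ₁(w₂) + ξ₂(w₁)) with dim L = dim W, and V ⊆ W a subspace such that (V × V⁰) ∩ L = {0}. Then for every ξ in the annihilator H⁰ of the horizontal space H = {w ∈ W : there exists η ∈ V⁰ with (w,η) ∈ L}, there is exactly one w ∈ V with (w,ξ) ∈ L. -/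
/-- Auxiliary equivalence: a product submodule is equivalent to the product of submodules. -/
def prodSubEquivAux {W D : Type*} [AddCommGroup W] [Module ℝ W]
    [AddCommGroup D] [Module ℝ D]
    (p : Submodule ℝ W) (q : Submodule ℝ D) : (p.prod q) ≃ₗ[ℝ] p × q where
  toFun x := (⟨x.1.1, x.2.1⟩, ⟨x.1.2, x.2.2⟩)
  invFun x := ⟨(x.1.1, x.2.1), ⟨x.1.2, x.2.2⟩⟩
  map_add' _ _ := rfl
  map_smul' _ _ := rfl
  left_inv _ := rfl
  right_inv _ := rfl

lemma finrank_prod_submodule_aux {W D : Type*} [AddCommGroup W] [Module ℝ W]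
    [AddCommGroup D] [Module ℝ D] [FiniteDimensional ℝ W] [FiniteDimensional ℝ D]
    (p : Submodule ℝ W) (q : Submodule ℝ D) :
    Module.finrank ℝ (p.prod q) = Module.finrank ℝ p + Module.finrank ℝ q := by
  rw [LinearEquiv.finrank_eq (prodSubEquivAux p q), Module.finrank_prod]


lemma finrank_horizontal_aux {W : Type*} [AddCommGroup W] [Module ℝ W] [FiniteDimensional ℝ W]
    (L : Submodule ℝ (W × Module.Dual ℝ W)) (V : Submodule ℝ W)
    (hnd : V.prod V.dualAnnihilator ⊓ L = ⊥)
    (M : Submodule ℝ (W × Module.Dual ℝ W))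
    (hM : M = L ⊓ (⊤ : Submodule ℝ W).prod V.dualAnnihilator) :
    Module.finrank ℝ M ≤ Module.finrank ℝ (horizontalSpace L V) := by
  have hmem : ∀ p : W × Module.Dual ℝ W, p ∈ M → p ∈ L ∧ p.2 ∈ V.dualAnnihilator := by
    intro p hp
    rw [hM] at hp
    exact ⟨hp.1, hp.2.2⟩
  have hg : ∀ x : M, (x : W × Module.Dual ℝ W).1 ∈ horizontalSpace L V := by
    rintro ⟨⟨a, b⟩, hab⟩
    obtain ⟨habL, habP⟩ := hmem (a, b) hab
    exact ⟨b, habP, habL⟩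
  let g : M →ₗ[ℝ] horizontalSpace L V :=
    { toFun := fun x => ⟨(x : W × Module.Dual ℝ W).1, hg x⟩
      map_add' := fun x y => rfl
      map_smul' := fun c x => rfl }
  have hginj : Function.Injective g := by
    rintro ⟨⟨a, b⟩, hab⟩ ⟨⟨a', b'⟩, hab'⟩ hxy
    have ha : a = a' := congrArg Subtype.val hxy
    subst ha
    obtain ⟨habL, habP⟩ := hmem (a, b) hab
    obtain ⟨habL', habP'⟩ := hmem (a, b') hab'
    have hmem2 : ((0, b - b') : W × Module.Dual ℝ W) ∈ V.prod V.dualAnnihilator ⊓ L := by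
      constructor
      · exact ⟨V.zero_mem, Submodule.sub_mem _ habP habP'⟩
      · have := L.sub_mem habL habL'
        simpa using this
    rw [hnd, Submodule.mem_bot, Prod.ext_iff] at hmem2
    have : b = b' := by
      have := hmem2.2
      simpa [sub_eq_zero] using this
    simp [this]
  exact LinearMap.finrank_le_finrank_of_injective hginj

/-- for an isotropic `L` with `dim L = dim W` and `(V × V⁰) ∩ L = {0}`,
every `ξ ∈ H⁰` has exactly one `w ∈ V` with `(w, ξ) ∈ L`. -/
theorem stmt7 {W : Type*} [AddCommGroup W] [Module ℝ W] [FiniteDimensional ℝ W]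
    (L : Submodule ℝ (W × Module.Dual ℝ W)) (V : Submodule ℝ W)
    (hiso : ∀ p ∈ L, ∀ q ∈ L, pairPlus p q = 0)
    (hdim : Module.finrank ℝ L = Module.finrank ℝ W)
    (hnd : V.prod V.dualAnnihilator ⊓ L = ⊥) :
    ∀ ξ ∈ (horizontalSpace L V).dualAnnihilator,
      ∃! w : W, w ∈ V ∧ (w, ξ) ∈ L := by
  classical
  set n := Module.finrank ℝ W with hn
  set k := Module.finrank ℝ V with hk
  have hVann : Module.finrank ℝ V.dualAnnihilator + k = n := by
    have h1 : Module.finrank ℝ (W ⧸ V) = Module.finrank ℝ V.dualAnnihilator :=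
      LinearEquiv.finrank_eq (Subspace.quotEquivAnnihilator V)
    have h2 := Submodule.finrank_quotient_add_finrank V
    omega
  have hdual : Module.finrank ℝ (Module.Dual ℝ W) = n := Subspace.dual_finrank_eq
  have htot : Module.finrank ℝ (W × Module.Dual ℝ W) = n + n := by
    rw [Module.finrank_prod, hdual]
  -- finrank of a product submodule
  -- finrank (V × V⁰) = n
  have hVV0 : Module.finrank ℝ (V.prod V.dualAnnihilator) = n := by
    rw [finrank_prod_submodule_aux V V.dualAnnihilator]; omega
  -- V × V⁰ and L are complementary
  have hsupTop : V.prod V.dualAnnihilator ⊔ L = ⊤ := by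
    apply Submodule.eq_top_of_finrank_eq
    have := Submodule.finrank_sup_add_finrank_inf_eq (V.prod V.dualAnnihilator) L
    rw [hnd, finrank_bot, add_zero, hVV0, hdim] at this
    rw [this, htot]
  -- the horizontal space H
  set H := horizontalSpace L V with hH
  -- the submodule M = L ⊓ (⊤ × V⁰) projects isomorphically onto H
  set P := (⊤ : Submodule ℝ W).prod V.dualAnnihilator with hP
  have hPrank : Module.finrank ℝ P + k = n + n := by
    rw [hP, finrank_prod_submodule_aux ⊤ V.dualAnnihilator, finrank_top]; omega
  have hMrank : Module.finrank ℝ ↥(L ⊓ P) + k ≥ n := by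
    have h1 := Submodule.finrank_sup_add_finrank_inf_eq L P
    have h2 : Module.finrank ℝ ↥(L ⊔ P) ≤ n + n := htot ▸ Submodule.finrank_le _
    rw [hdim] at h1
    omega
  have hHrank : Module.finrank ℝ H + k ≥ n := by
    have h3 := finrank_horizontal_aux L V hnd (L ⊓ P) (by rw [hP])
    rw [← hH] at h3
    omega
  -- V and H are disjoint
  have hVH : V ⊓ H = ⊥ := by
    rw [eq_bot_iff]
    rintro w ⟨hwV, η, hη, hLη⟩
    have : ((w, η) : W × Module.Dual ℝ W) ∈ V.prod V.dualAnnihilator ⊓ L :=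
      ⟨⟨hwV, hη⟩, hLη⟩
    rw [hnd, Submodule.mem_bot] at this
    simpa using congrArg Prod.fst this
  -- V ⊔ H = ⊤
  have hVHtop : V ⊔ H = ⊤ := by
    apply Submodule.eq_top_of_finrank_eq
    have h1 := Submodule.finrank_sup_add_finrank_inf_eq V H
    rw [hVH, finrank_bot, add_zero] at h1
    have h2 : Module.finrank ℝ ↥(V ⊔ H) ≤ n := Submodule.finrank_le _
    omega
  have hannbot : V.dualAnnihilator ⊓ H.dualAnnihilator = ⊥ := by
    rw [← Submodule.dualAnnihilator_sup_eq, hVHtop, Submodule.dualAnnihilator_top]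
  -- now the main argument
  intro ξ hξ
  -- existence
  obtain ⟨p, hp, l, hl, hpl⟩ := Submodule.mem_sup.mp
    (hsupTop ▸ Submodule.mem_top : ((0 : W), ξ) ∈ V.prod V.dualAnnihilator ⊔ L)
  obtain ⟨v, η⟩ := p
  obtain ⟨hv, hη⟩ := hp
  have hleq : l = (-v, ξ - η) := by
    have : l = ((0 : W), ξ) - (v, η) := by rw [← hpl]; abel
    rw [this, Prod.mk_sub_mk, zero_sub]
  -- η annihilates H
  have hηH : η ∈ H.dualAnnihilator := by
    rw [Submodule.mem_dualAnnihilator]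
    rintro h ⟨θ, hθ, hLθ⟩
    have hpair := hiso l hl (h, θ) hLθ
    rw [hleq] at hpair
    simp only [pairPlus] at hpair
    have hθv : θ v = 0 := ((Submodule.mem_dualAnnihilator _).mp hθ) v hv
    have hξh : ξ h = 0 := ((Submodule.mem_dualAnnihilator _).mp hξ) h ⟨θ, hθ, hLθ⟩
    simp only [LinearMap.sub_apply, map_neg, hθv, hξh, neg_zero, add_zero] at hpair
    have : ξ h - η h = 0 := by linarith
    linarith [hξh]
  have hη0 : η = 0 := by
    have : η ∈ V.dualAnnihilator ⊓ H.dualAnnihilator := ⟨hη, hηH⟩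
    rw [hannbot, Submodule.mem_bot] at this
    exact this
  have hwL : ((-v : W), ξ) ∈ L := by
    have := hleq ▸ hl
    rwa [hη0, sub_zero] at this
  refine ⟨-v, ⟨V.neg_mem hv, hwL⟩, ?_⟩
  -- uniqueness
  rintro y ⟨hyV, hyL⟩
  have : ((y - -v, (0 : Module.Dual ℝ W)) : W × Module.Dual ℝ W)
      ∈ V.prod V.dualAnnihilator ⊓ L := by
    refine ⟨⟨V.sub_mem hyV (V.neg_mem hv), Submodule.zero_mem _⟩, ?_⟩
    have := L.sub_mem hyL hwL
    simpa using this
  rw [hnd, Submodule.mem_bot] at this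
  have : y - -v = 0 := by simpa using congrArg Prod.fst this
  exact sub_eq_zero.mp this
end

section
/- Let W be a finite-dimensional real vector space, L ⊆ W × W* an isotropic subspace for the pairing ⟨(w₁,ξ₁),(w₂,ξ₂)⟩₊ = (1/2)(ξ₁(w₂) + ξ₂(w₁)) with dim L = dim W, and V ⊆ W a subspace such that (V × V⁰) ∩ L = {0}. For ξ in the annihilator H⁰ of the horizontal space H = {w ∈ W : there exists η ∈ V⁰ with (w,η) ∈ L}, let w_ξ denote the unique element of V with (w_ξ,ξ) ∈ L. Then the map π : H⁰ × H⁰ → ℝ, π(ξ₁,ξ₂) = ξ₁(w_{ξ₂}), is bilinear and alternating. -/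
/-- for an isotropic `L` with `dim L = dim W` and `(V × V⁰) ∩ L = {0}`,
the form `π(ξ₁,ξ₂) = ξ₁(w_{ξ₂})` on `H⁰` (where `w_ξ` is the unique element of `V`
with `(w_ξ, ξ) ∈ L`) is bilinear and alternating. -/
theorem stmt8 {W : Type*} [AddCommGroup W] [Module ℝ W] [FiniteDimensional ℝ W]
    (L : Submodule ℝ (W × Module.Dual ℝ W)) (V : Submodule ℝ W)
    (hiso : ∀ p ∈ L, ∀ q ∈ L, pairPlus p q = 0)
    (hdim : Module.finrank ℝ L = Module.finrank ℝ W)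
    (hnd : V.prod V.dualAnnihilator ⊓ L = ⊥)
    (wf : Module.Dual ℝ W → W)
    (hwf : ∀ ξ ∈ (horizontalSpace L V).dualAnnihilator, wf ξ ∈ V ∧ (wf ξ, ξ) ∈ L) :
    -- alternating:
    (∀ ξ ∈ (horizontalSpace L V).dualAnnihilator, ξ (wf ξ) = 0) ∧
    (∀ ξ₁ ∈ (horizontalSpace L V).dualAnnihilator,
      ∀ ξ₂ ∈ (horizontalSpace L V).dualAnnihilator, ξ₁ (wf ξ₂) = -ξ₂ (wf ξ₁)) ∧
    -- bilinear in the first argument: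
    (∀ ξ₁ ξ₂ : Module.Dual ℝ W, ∀ ξ₃ ∈ (horizontalSpace L V).dualAnnihilator,
        (ξ₁ + ξ₂) (wf ξ₃) = ξ₁ (wf ξ₃) + ξ₂ (wf ξ₃)) ∧
    (∀ c : ℝ, ∀ ξ : Module.Dual ℝ W, ∀ ξ' ∈ (horizontalSpace L V).dualAnnihilator,
        (c • ξ) (wf ξ') = c * ξ (wf ξ')) ∧
    -- bilinear in the second argument:
    (∀ ξ : Module.Dual ℝ W, ∀ ξ₂ ∈ (horizontalSpace L V).dualAnnihilator,
      ∀ ξ₃ ∈ (horizontalSpace L V).dualAnnihilator,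
        ξ (wf (ξ₂ + ξ₃)) = ξ (wf ξ₂) + ξ (wf ξ₃)) ∧
    (∀ ξ : Module.Dual ℝ W, ∀ c : ℝ, ∀ ξ' ∈ (horizontalSpace L V).dualAnnihilator,
        ξ (wf (c • ξ')) = c * ξ (wf ξ')) := by

  have key : ∀ ξ₁ ∈ (horizontalSpace L V).dualAnnihilator,
      ∀ ξ₂ ∈ (horizontalSpace L V).dualAnnihilator,
      ξ₁ (wf ξ₂) + ξ₂ (wf ξ₁) = 0 := by
    intro ξ₁ h1 ξ₂ h2
    have h := hiso _ (hwf ξ₁ h1).2 _ (hwf ξ₂ h2).2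
    simp only [pairPlus] at h
    linarith
  have hzero : ∀ v ∈ V, (v, (0 : Module.Dual ℝ W)) ∈ L → v = 0 := by
    intro v hv hL
    have hmem : (v, (0 : Module.Dual ℝ W)) ∈ V.prod V.dualAnnihilator ⊓ L :=
      ⟨⟨hv, Submodule.zero_mem _⟩, hL⟩
    rw [hnd] at hmem
    exact congrArg Prod.fst (Submodule.mem_bot ℝ |>.mp hmem)
  have hadd : ∀ ξ₂ ∈ (horizontalSpace L V).dualAnnihilator,
      ∀ ξ₃ ∈ (horizontalSpace L V).dualAnnihilator,
      wf (ξ₂ + ξ₃) = wf ξ₂ + wf ξ₃ := by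
    intro ξ₂ h2 ξ₃ h3
    have h23 := hwf (ξ₂ + ξ₃) (add_mem h2 h3)
    have h2' := hwf ξ₂ h2
    have h3' := hwf ξ₃ h3
    have hd : wf (ξ₂ + ξ₃) - wf ξ₂ - wf ξ₃ = 0 := by
      apply hzero _ (sub_mem (sub_mem h23.1 h2'.1) h3'.1)
      have : ((wf (ξ₂ + ξ₃), ξ₂ + ξ₃) - (wf ξ₂, ξ₂) - (wf ξ₃, ξ₃) :
          W × Module.Dual ℝ W) ∈ L := sub_mem (sub_mem h23.2 h2'.2) h3'.2
      simpa using this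
    rw [sub_sub] at hd
    exact sub_eq_zero.mp hd
  have hsmul : ∀ c : ℝ, ∀ ξ ∈ (horizontalSpace L V).dualAnnihilator,
      wf (c • ξ) = c • wf ξ := by
    intro c ξ h
    have hc := hwf (c • ξ) (Submodule.smul_mem _ c h)
    have h' := hwf ξ h
    have hd : wf (c • ξ) - c • wf ξ = 0 := by
      apply hzero _ (sub_mem hc.1 (Submodule.smul_mem _ c h'.1))
      have : ((wf (c • ξ), c • ξ) - c • (wf ξ, ξ) : W × Module.Dual ℝ W) ∈ L :=
        sub_mem hc.2 (Submodule.smul_mem _ c h'.2)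
      simpa using this
    exact sub_eq_zero.mp hd
  refine ⟨?_, ?_, ?_, ?_, ?_, ?_⟩
  · intro ξ h; have := key ξ h ξ h; linarith
  · intro ξ₁ h1 ξ₂ h2; have := key ξ₁ h1 ξ₂ h2; linarith
  · intro ξ₁ ξ₂ ξ₃ _; simp
  · intro c ξ ξ' _; simp
  · intro ξ ξ₂ h2 ξ₃ h3; rw [hadd ξ₂ h2 ξ₃ h3, map_add]
  · intro ξ c ξ' h; rw [hsmul c ξ' h, map_smul, smul_eq_mul]
end

section
/- Let W be a finite-dimensional real vector space, L ⊆ W × W* an isotropic subspace for the pairing ⟨(w₁,ξ₁),(w₂,ξ₂)⟩₊ = (1/2)(ξ₁(w₂) + ξ₂(w₁)) with dim L = dim W, and V ⊆ W a subspace such that (V × V⁰) ∩ L = {0}. Then the second projection W × W* → W* restricts to a linear isomorphism from L ∩ (V × W*) onto the annihilator H⁰ of the horizontal space H = {w ∈ W : there exists ξ ∈ V⁰ with (w,ξ) ∈ L}. -/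
open Module

theorem Submodule.finrank_prod_eq {K M M' : Type*} [DivisionRing K] [AddCommGroup M]
    [AddCommGroup M'] [Module K M] [Module K M'] (p : Submodule K M) (q : Submodule K M')
    [FiniteDimensional K p] [FiniteDimensional K q] :
    finrank K (p.prod q) = finrank K p + finrank K q := by
  have hinj : Function.Injective (p.subtype.prodMap q.subtype) :=
    p.injective_subtype.prodMap q.injective_subtype
  have h := LinearMap.finrank_range_of_inj hinj
  rw [LinearMap.range_prodMap, p.range_subtype, q.range_subtype] at h
  rw [h, finrank_prod]

theorem Submodule.finrank_add_finrank_le_finrank_add_finrank_inf {K E : Type*} [DivisionRing K]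
    [AddCommGroup E] [Module K E] [FiniteDimensional K E] (s t : Submodule K E) :
    finrank K s + finrank K t ≤ finrank K E + finrank K ↥(s ⊓ t) := by
  rw [← Submodule.finrank_sup_add_finrank_inf_eq]
  exact Nat.add_le_add_right (Submodule.finrank_le _) _

section

variable {W : Type*} [AddCommGroup W] [Module ℝ W]
  (L : Submodule ℝ (W × Dual ℝ W)) (V : Submodule ℝ W)

theorem snd_mem_dualAnnihilator_horizontalSpace (hiso : ∀ p ∈ L, ∀ q ∈ L, pairPlus p q = 0)
    {x : W × Dual ℝ W} (hx : x ∈ L ⊓ V.prod ⊤) :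
    x.2 ∈ (horizontalSpace L V).dualAnnihilator := by
  rw [Submodule.mem_dualAnnihilator]
  rintro w ⟨ξ, hξ, hwξ⟩
  have hξx : ξ x.1 = 0 := (Submodule.mem_dualAnnihilator ξ).mp hξ x.1 hx.2.1
  have h := hiso x hx.1 (w, ξ) hwξ
  rw [pairPlus, hξx] at h
  linarith

theorem horizontalSpace_eq_range :
    horizontalSpace L V =
      LinearMap.range ((LinearMap.fst ℝ W (Dual ℝ W)).domRestrict
        (L ⊓ (⊤ : Submodule ℝ W).prod V.dualAnnihilator)) := by
  ext w
  constructor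
  · rintro ⟨ξ, hξ, hwξ⟩
    exact ⟨⟨(w, ξ), hwξ, trivial, hξ⟩, rfl⟩
  · rintro ⟨⟨x, hxL, -, hxV⟩, rfl⟩
    exact ⟨x.2, hxV, hxL⟩

variable {L V}

theorem eq_zero_of_mem_prod_top_of_snd_eq_zero (hnd : V.prod V.dualAnnihilator ⊓ L = ⊥)
    {x : W × Dual ℝ W} (hx : x ∈ L ⊓ V.prod ⊤) (h : x.2 = 0) : x = 0 := by
  have hx' : x ∈ V.prod V.dualAnnihilator ⊓ L := ⟨⟨hx.2.1, h ▸ Submodule.zero_mem _⟩, hx.1⟩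
  rwa [hnd] at hx'

theorem eq_zero_of_mem_top_prod_of_fst_eq_zero (hnd : V.prod V.dualAnnihilator ⊓ L = ⊥)
    {x : W × Dual ℝ W} (hx : x ∈ L ⊓ (⊤ : Submodule ℝ W).prod V.dualAnnihilator)
    (h : x.1 = 0) : x = 0 := by
  have hx' : x ∈ V.prod V.dualAnnihilator ⊓ L := ⟨⟨h ▸ V.zero_mem, hx.2.2⟩, hx.1⟩
  rwa [hnd] at hx'

variable [FiniteDimensional ℝ W]

theorem finrank_le_finrank_inf_prod_top (hdim : finrank ℝ L = finrank ℝ W) :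
    finrank ℝ V ≤ finrank ℝ ↥(L ⊓ V.prod ⊤) := by
  have h := L.finrank_add_finrank_le_finrank_add_finrank_inf (V.prod ⊤)
  rw [Submodule.finrank_prod_eq, finrank_top, hdim, finrank_prod,
    Subspace.dual_finrank_eq] at h
  omega

theorem finrank_dualAnnihilator_le_finrank_horizontalSpace
    (hdim : finrank ℝ L = finrank ℝ W) (hnd : V.prod V.dualAnnihilator ⊓ L = ⊥) :
    finrank ℝ V.dualAnnihilator ≤ finrank ℝ (horizontalSpace L V) := by
  have hN := L.finrank_add_finrank_le_finrank_add_finrank_inf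
    ((⊤ : Submodule ℝ W).prod V.dualAnnihilator)
  rw [Submodule.finrank_prod_eq, finrank_top, hdim, finrank_prod,
    Subspace.dual_finrank_eq] at hN
  have hinj : Function.Injective ((LinearMap.fst ℝ W (Dual ℝ W)).domRestrict
      (L ⊓ (⊤ : Submodule ℝ W).prod V.dualAnnihilator)) := by
    refine (injective_iff_map_eq_zero _).mpr fun x hx => Subtype.ext ?_
    exact eq_zero_of_mem_top_prod_of_fst_eq_zero hnd x.2 hx
  rw [horizontalSpace_eq_range, LinearMap.finrank_range_of_inj hinj]
  omega

theorem finrank_dualAnnihilator_horizontalSpace_le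
    (hdim : finrank ℝ L = finrank ℝ W) (hnd : V.prod V.dualAnnihilator ⊓ L = ⊥) :
    finrank ℝ (horizontalSpace L V).dualAnnihilator ≤ finrank ℝ V := by
  have hV := Subspace.finrank_add_finrank_dualAnnihilator_eq V
  have hH := Subspace.finrank_add_finrank_dualAnnihilator_eq (horizontalSpace L V)
  have hle := finrank_dualAnnihilator_le_finrank_horizontalSpace hdim hnd
  omega

end

/-- for an isotropic `L` with `dim L = dim W` and `(V × V⁰) ∩ L = {0}`,
the second projection restricts to a linear isomorphism from `L ∩ (V × W*)` onto the
annihilator `H⁰` of the horizontal space. -/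
theorem stmt10 {W : Type*} [AddCommGroup W] [Module ℝ W] [FiniteDimensional ℝ W]
    (L : Submodule ℝ (W × Module.Dual ℝ W)) (V : Submodule ℝ W)
    (hiso : ∀ p ∈ L, ∀ q ∈ L, pairPlus p q = 0)
    (hdim : Module.finrank ℝ L = Module.finrank ℝ W)
    (hnd : V.prod V.dualAnnihilator ⊓ L = ⊥) :
    ∃ e : ↥(L ⊓ V.prod (⊤ : Submodule ℝ (Module.Dual ℝ W))) ≃ₗ[ℝ]
        ↥((horizontalSpace L V).dualAnnihilator),
      ∀ x, (e x : Module.Dual ℝ W) = (x : W × Module.Dual ℝ W).2 := by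
  let f : ↥(L ⊓ V.prod ⊤) →ₗ[ℝ] ↥((horizontalSpace L V).dualAnnihilator) :=
    ((LinearMap.snd ℝ W (Dual ℝ W)).domRestrict (L ⊓ V.prod ⊤)).codRestrict _
      fun x => snd_mem_dualAnnihilator_horizontalSpace L V hiso x.2
  have hinj : Function.Injective f := by
    rw [injective_iff_map_eq_zero]
    intro x hx
    exact Subtype.ext (eq_zero_of_mem_prod_top_of_snd_eq_zero hnd x.2 (congrArg Subtype.val hx))
  have hrank : finrank ℝ ↥(L ⊓ V.prod ⊤) = finrank ℝ (horizontalSpace L V).dualAnnihilator :=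
    (LinearMap.finrank_le_finrank_of_injective hinj).antisymm
      ((finrank_dualAnnihilator_horizontalSpace_le hdim hnd).trans
        (finrank_le_finrank_inf_prod_top hdim))
  exact ⟨LinearMap.linearEquivOfInjective (V := ↥(L ⊓ V.prod ⊤))
    (V₂ := ↥((horizontalSpace L V).dualAnnihilator)) f hinj hrank, fun x => by
    rw [LinearMap.linearEquivOfInjective_apply]; rfl⟩
end

section
/- Let W be a finite-dimensional real vector space, L ⊆ W × W* an isotropic subspace for the pairing ⟨(w₁,ξ₁),(w₂,ξ₂)⟩₊ = (1/2)(ξ₁(w₂) + ξ₂(w₁)) with dim L = dim W, and V ⊆ W a subspace such that (V × V⁰) ∩ L = {0}. Then L is the internal direct sum of the subspaces L ∩ (W × V⁰) and L ∩ (V × W*). -/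
open Module in
lemma finrank_submodule_prod {R M N : Type*} [Field R] [AddCommGroup M] [Module R M]
    [AddCommGroup N] [Module R N] [FiniteDimensional R M] [FiniteDimensional R N]
    (p : Submodule R M) (q : Submodule R N) :
    finrank R (p.prod q) = finrank R p + finrank R q := by
  have e : (p.prod q) ≃ₗ[R] p × q :=
    { toFun := fun x => (⟨x.1.1, x.2.1⟩, ⟨x.1.2, x.2.2⟩)
      invFun := fun x => ⟨(x.1.1, x.2.1), ⟨x.1.2, x.2.2⟩⟩
      left_inv := fun x => rfl
      right_inv := fun x => rfl
      map_add' := fun x y => rfl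
      map_smul' := fun c x => rfl }
  rw [e.finrank_eq, Module.finrank_prod]

open Module

/-- for an isotropic `L` with `dim L = dim W` and `(V × V⁰) ∩ L = {0}`,
`L` is the internal direct sum of `L ∩ (W × V⁰)` and `L ∩ (V × W*)`. -/
theorem stmt11 {W : Type*} [AddCommGroup W] [Module ℝ W] [FiniteDimensional ℝ W]
    (L : Submodule ℝ (W × Module.Dual ℝ W)) (V : Submodule ℝ W)
    (hiso : ∀ p ∈ L, ∀ q ∈ L, pairPlus p q = 0)
    (hdim : Module.finrank ℝ L = Module.finrank ℝ W)
    (hnd : V.prod V.dualAnnihilator ⊓ L = ⊥) :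
    (L ⊓ (⊤ : Submodule ℝ W).prod V.dualAnnihilator) ⊓
        (L ⊓ V.prod (⊤ : Submodule ℝ (Module.Dual ℝ W))) = ⊥ ∧
    (L ⊓ (⊤ : Submodule ℝ W).prod V.dualAnnihilator) ⊔
        (L ⊓ V.prod (⊤ : Submodule ℝ (Module.Dual ℝ W))) = L := by
  set n := finrank ℝ W with hn
  set k := finrank ℝ V with hk
  have hkn : k ≤ n := V.finrank_le
  have hann : finrank ℝ V.dualAnnihilator = n - k := by
    have h1 := Submodule.finrank_quotient_add_finrank V
    have h2 : finrank ℝ (W ⧸ V) = finrank ℝ V.dualAnnihilator :=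
      (Subspace.quotEquivAnnihilator V).finrank_eq
    omega
  have hdual : finrank ℝ (Module.Dual ℝ W) = n := Subspace.dual_finrank_eq
  have htot : finrank ℝ (W × Module.Dual ℝ W) = n + n := by
    rw [Module.finrank_prod, hdual]
  -- inf is ⊥
  have hinf : (L ⊓ (⊤ : Submodule ℝ W).prod V.dualAnnihilator) ⊓
      (L ⊓ V.prod (⊤ : Submodule ℝ (Module.Dual ℝ W))) = ⊥ := by
    rw [eq_bot_iff, ← hnd]
    intro x hx
    simp only [Submodule.mem_inf, Submodule.mem_prod, Submodule.mem_top, and_true, true_and] at hx ⊢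
    exact ⟨⟨hx.2.2, hx.1.2⟩, hx.1.1⟩
  refine ⟨hinf, ?_⟩
  -- V.prod V.dualAnnihilator ⊔ L = ⊤
  have hVV : finrank ℝ (V.prod V.dualAnnihilator) = n := by
    rw [finrank_submodule_prod, hann]; omega
  have hsuptop : V.prod V.dualAnnihilator ⊔ L = ⊤ := by
    apply Submodule.eq_top_of_finrank_eq
    have := Submodule.finrank_sup_add_finrank_inf_eq (V.prod V.dualAnnihilator) L
    rw [hnd, finrank_bot] at this
    omega
  have hsup1 : (⊤ : Submodule ℝ W).prod V.dualAnnihilator ⊔ L = ⊤ := by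
    rw [eq_top_iff, ← hsuptop]
    exact sup_le_sup_right (Submodule.prod_mono le_top le_rfl) L
  have hsup2 : V.prod (⊤ : Submodule ℝ (Module.Dual ℝ W)) ⊔ L = ⊤ := by
    rw [eq_top_iff, ← hsuptop]
    exact sup_le_sup_right (Submodule.prod_mono le_rfl le_top) L
  have hr1 : finrank ℝ ((⊤ : Submodule ℝ W).prod V.dualAnnihilator) = n + (n - k) := by
    rw [finrank_submodule_prod, hann, finrank_top]
  have hr2 : finrank ℝ (V.prod (⊤ : Submodule ℝ (Module.Dual ℝ W))) = k + n := by
    rw [finrank_submodule_prod, finrank_top, hdual]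
  have hA : finrank ℝ (L ⊓ (⊤ : Submodule ℝ W).prod V.dualAnnihilator : Submodule ℝ _) = n - k := by
    have := Submodule.finrank_sup_add_finrank_inf_eq L ((⊤ : Submodule ℝ W).prod V.dualAnnihilator)
    rw [sup_comm] at this
    rw [hsup1, finrank_top, htot, hdim, hr1] at this
    omega
  have hB : finrank ℝ (L ⊓ V.prod (⊤ : Submodule ℝ (Module.Dual ℝ W)) : Submodule ℝ _) = k := by
    have := Submodule.finrank_sup_add_finrank_inf_eq L (V.prod (⊤ : Submodule ℝ (Module.Dual ℝ W)))
    rw [sup_comm] at this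
    rw [hsup2, finrank_top, htot, hdim, hr2] at this
    omega
  apply Submodule.eq_of_le_of_finrank_eq
  · exact sup_le inf_le_left inf_le_left
  · have := Submodule.finrank_sup_add_finrank_inf_eq
      (L ⊓ (⊤ : Submodule ℝ W).prod V.dualAnnihilator)
      (L ⊓ V.prod (⊤ : Submodule ℝ (Module.Dual ℝ W)))
    rw [hinf, finrank_bot, hA, hB] at this
    rw [hdim]
    omega
end

section
/- Let W be a finite-dimensional real vector space which is the internal direct sum of subspaces V and H, let ω : H × H → ℝ be an alternating bilinear form, and let π : H⁰ × H⁰ → ℝ be an alternating bilinear form on the annihilator H⁰. Define ω̃ : H → V⁰ by ω̃(h)(v + h') = ω(h,h') for v ∈ V, h' ∈ H, and define π# : H⁰ → V by the requirement η(π#(ξ)) = π(η,ξ) for all η ∈ H⁰ (this determines π#(ξ) uniquely since restriction to V is an isomorphism H⁰ ≅ V*). Then L := {(h + π#(ξ), ω̃(h) + ξ) : h ∈ H, ξ ∈ H⁰} is an isotropic subspace for the pairing ⟨(w₁,ξ₁),(w₂,ξ₂)⟩₊ = (1/2)(ξ₁(w₂) + ξ₂(w₁)) with dim L = dim W, it satisfies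 (V × V⁰) ∩ L = {0}, its horizontal space {w ∈ W : there exists α ∈ V⁰ with (w,α) ∈ L} equals H, and moreover: for all h₁, h₂ ∈ H the unique α ∈ V⁰ with (h₁,α) ∈ L satisfies α(h₂) = ω(h₁,h₂), and for all ξ₁, ξ₂ ∈ H⁰ the unique w ∈ V with (w,ξ₂) ∈ L satisfies ξ₁(w) = π(ξ₁,ξ₂). -/
open Module Submodule

section Graph

variable {R W : Type*} [CommRing R] [AddCommGroup W] [Module R W] {V H : Submodule R W}

theorem disjoint_dualAnnihilator_of_codisjoint (hVH : Codisjoint V H) :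
    Disjoint V.dualAnnihilator H.dualAnnihilator := by
  rw [disjoint_iff, ← dualAnnihilator_sup_eq, codisjoint_iff.mp hVH, dualAnnihilator_top]

variable (omt : H →ₗ[R] Dual R W) (pish : H.dualAnnihilator →ₗ[R] W)

def graphParam : H × H.dualAnnihilator →ₗ[R] W × Dual R W :=
  (H.subtype.coprod pish).prod (omt.coprod H.dualAnnihilator.subtype)

@[simp]
theorem graphParam_apply (x : H × H.dualAnnihilator) :
    graphParam omt pish x = ((x.1 : W) + pish x.2, omt x.1 + (x.2 : Dual R W)) :=
  rfl

theorem mem_range_graphParam_iff (p : W × Dual R W) :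
    p ∈ LinearMap.range (graphParam omt pish) ↔ ∃ (h : H) (ξ : H.dualAnnihilator),
      p = ((h : W) + pish ξ, omt h + (ξ : Dual R W)) := by
  simp only [LinearMap.mem_range, Prod.exists, graphParam_apply]
  exact exists₂_congr fun _ _ => eq_comm

variable {omt pish}

theorem graphParam_fst_mem_iff (hVH : Disjoint V H) (hpish : ∀ ξ, pish ξ ∈ V)
    (x : H × H.dualAnnihilator) : (graphParam omt pish x).1 ∈ V ↔ x.1 = 0 := by
  rw [graphParam_apply, add_mem_cancel_right (hpish x.2)]
  refine ⟨fun hV => Subtype.ext (disjoint_def.mp hVH _ hV x.1.2), fun h => ?_⟩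
  simp [h]

theorem graphParam_snd_mem_iff (hVH : Disjoint V.dualAnnihilator H.dualAnnihilator)
    (homt : ∀ h, omt h ∈ V.dualAnnihilator) (x : H × H.dualAnnihilator) :
    (graphParam omt pish x).2 ∈ V.dualAnnihilator ↔ x.2 = 0 := by
  rw [graphParam_apply, add_mem_cancel_left (homt x.1)]
  refine ⟨fun hV => Subtype.ext (disjoint_def.mp hVH _ hV x.2.2), fun h => ?_⟩
  simp [h]

theorem graphParam_eq_of_fst_mem (hVH : Disjoint V H) (hpish : ∀ ξ, pish ξ ∈ V)
    {x : H × H.dualAnnihilator} (hx : (graphParam omt pish x).1 ∈ V) :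
    graphParam omt pish x = (pish x.2, (x.2 : Dual R W)) := by
  simp [(graphParam_fst_mem_iff hVH hpish x).mp hx]

theorem graphParam_eq_of_snd_mem (hVH : Disjoint V.dualAnnihilator H.dualAnnihilator)
    (homt : ∀ h, omt h ∈ V.dualAnnihilator) {x : H × H.dualAnnihilator}
    (hx : (graphParam omt pish x).2 ∈ V.dualAnnihilator) :
    graphParam omt pish x = ((x.1 : W), omt x.1) := by
  simp [(graphParam_snd_mem_iff hVH homt x).mp hx]

theorem prod_dualAnnihilator_inf_range_graphParam (hVH : IsCompl V H)
    (homt : ∀ h, omt h ∈ V.dualAnnihilator) (hpish : ∀ ξ, pish ξ ∈ V) :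
    V.prod V.dualAnnihilator ⊓ LinearMap.range (graphParam omt pish) = ⊥ := by
  rw [eq_bot_iff]
  rintro _ ⟨⟨hV, hV'⟩, x, rfl⟩
  have h₁ := (graphParam_fst_mem_iff hVH.disjoint hpish x).mp hV
  have h₂ := (graphParam_snd_mem_iff (disjoint_dualAnnihilator_of_codisjoint hVH.codisjoint)
    homt x).mp hV'
  simp [(Prod.ext h₁ h₂ : x = 0)]

theorem injective_graphParam (hVH : IsCompl V H)
    (homt : ∀ h, omt h ∈ V.dualAnnihilator) (hpish : ∀ ξ, pish ξ ∈ V) :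
    Function.Injective (graphParam omt pish) := by
  refine (injective_iff_map_eq_zero _).mpr fun x hx => ?_
  have h₁ := (graphParam_fst_mem_iff hVH.disjoint hpish x).mp (by rw [hx]; exact zero_mem _)
  have h₂ := (graphParam_snd_mem_iff (disjoint_dualAnnihilator_of_codisjoint hVH.codisjoint)
    homt x).mp (by rw [hx]; exact zero_mem _)
  exact Prod.ext h₁ h₂

theorem graphParam_snd_apply_fst (homt : ∀ h, omt h ∈ V.dualAnnihilator)
    (hpish : ∀ ξ, pish ξ ∈ V) (x y : H × H.dualAnnihilator) :
    (graphParam omt pish x).2 (graphParam omt pish y).1 =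
      omt x.1 y.1 + (x.2 : Dual R W) (pish y.2) := by
  have h₁ : omt x.1 (pish y.2) = 0 := (mem_dualAnnihilator _).mp (homt x.1) _ (hpish y.2)
  have h₂ : (x.2 : Dual R W) y.1 = 0 := (mem_dualAnnihilator _).mp x.2.2 _ y.1.2
  simp [h₁, h₂]

theorem exists_eq_omt_of_mem_range_graphParam
    (hVH : Disjoint V.dualAnnihilator H.dualAnnihilator) (homt : ∀ h, omt h ∈ V.dualAnnihilator)
    {w : W} {α : Dual R W} (hmem : (w, α) ∈ LinearMap.range (graphParam omt pish))
    (hα : α ∈ V.dualAnnihilator) : ∃ h : H, w = h ∧ α = omt h := by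
  obtain ⟨x, hx⟩ := hmem
  have hx' := graphParam_eq_of_snd_mem hVH homt (hx ▸ hα : (graphParam omt pish x).2 ∈ _)
  rw [hx, Prod.ext_iff] at hx'
  exact ⟨x.1, hx'⟩

theorem exists_eq_pish_of_mem_range_graphParam (hVH : Disjoint V H) (hpish : ∀ ξ, pish ξ ∈ V)
    {w : W} {α : Dual R W} (hmem : (w, α) ∈ LinearMap.range (graphParam omt pish))
    (hw : w ∈ V) : ∃ ξ : H.dualAnnihilator, w = pish ξ ∧ α = ξ := by
  obtain ⟨x, hx⟩ := hmem
  have hx' := graphParam_eq_of_fst_mem hVH hpish (hx ▸ hw : (graphParam omt pish x).1 ∈ V)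
  rw [hx, Prod.ext_iff] at hx'
  exact ⟨x.2, hx'⟩

end Graph

section Finrank

variable {K W : Type*} [Field K] [AddCommGroup W] [Module K W] [FiniteDimensional K W]
  {V H : Subspace K W} {omt : H →ₗ[K] Dual K W} {pish : H.dualAnnihilator →ₗ[K] W}

theorem finrank_range_graphParam (hVH : IsCompl V H)
    (homt : ∀ h, omt h ∈ V.dualAnnihilator) (hpish : ∀ ξ, pish ξ ∈ V) :
    finrank K (LinearMap.range (graphParam omt pish)) = finrank K W := by
  have := Free.of_divisionRing K H.dualAnnihilator
  rw [LinearMap.finrank_range_of_inj (injective_graphParam hVH homt hpish), finrank_prod,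
    Subspace.finrank_add_finrank_dualAnnihilator_eq]

end Finrank

section Real

variable {W : Type*} [AddCommGroup W] [Module ℝ W] {V H : Submodule ℝ W}
  {omt : H →ₗ[ℝ] Dual ℝ W} {pish : H.dualAnnihilator →ₗ[ℝ] W}

theorem horizontalSpace_range_graphParam (hVH : IsCompl V H)
    (homt : ∀ h, omt h ∈ V.dualAnnihilator) :
    horizontalSpace (LinearMap.range (graphParam omt pish)) V = H := by
  ext w
  constructor
  · rintro ⟨α, hα, hmem⟩
    obtain ⟨h, rfl, -⟩ := exists_eq_omt_of_mem_range_graphParam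
      (disjoint_dualAnnihilator_of_codisjoint hVH.codisjoint) homt hmem hα
    exact h.2
  · intro hw
    exact ⟨omt ⟨w, hw⟩, homt _, (⟨w, hw⟩, 0), by simp⟩

theorem pairPlus_eq_zero_of_mem_range_graphParam {ω : H →ₗ[ℝ] H →ₗ[ℝ] ℝ} (hω : ω.IsAlt)
    {π : H.dualAnnihilator →ₗ[ℝ] H.dualAnnihilator →ₗ[ℝ] ℝ} (hπ : π.IsAlt)
    (homt : ∀ h, omt h ∈ V.dualAnnihilator) (homt_eq : ∀ h h' : H, omt h h' = ω h h')
    (hpish : ∀ ξ, pish ξ ∈ V)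
    (hpish_eq : ∀ η ξ : H.dualAnnihilator, (η : Dual ℝ W) (pish ξ) = π η ξ) :
    ∀ p ∈ LinearMap.range (graphParam omt pish), ∀ q ∈ LinearMap.range (graphParam omt pish),
      pairPlus p q = 0 := by
  rintro _ ⟨x, rfl⟩ _ ⟨y, rfl⟩
  rw [pairPlus, graphParam_snd_apply_fst homt hpish, graphParam_snd_apply_fst homt hpish,
    homt_eq, homt_eq, hpish_eq, hpish_eq, ← hω.neg, ← hπ.neg]
  ring

end Real

/-- given `W = V ⊕ H`, an alternating bilinear form `ω` on `H` and an
alternating bilinear form `π` on `H⁰`, the subspace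
`L = {(h + π#(ξ), ω̃(h) + ξ) : h ∈ H, ξ ∈ H⁰}` is isotropic with `dim L = dim W`,
satisfies `(V × V⁰) ∩ L = {0}`, its horizontal space equals `H`, and it induces `ω` as
its horizontal 2-form and `π` as its vertical bivector. -/
theorem stmt13 {W : Type*} [AddCommGroup W] [Module ℝ W] [FiniteDimensional ℝ W]
    (V H : Submodule ℝ W) (hVH : IsCompl V H)
    (ω : H →ₗ[ℝ] H →ₗ[ℝ] ℝ) (hω : ∀ h, ω h h = 0)
    (π : H.dualAnnihilator →ₗ[ℝ] H.dualAnnihilator →ₗ[ℝ] ℝ) (hπ : ∀ ξ, π ξ ξ = 0)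
    -- `ω̃ : H → V⁰`, determined by `ω̃(h)(v + h') = ω(h,h')`:
    (omt : H →ₗ[ℝ] Module.Dual ℝ W)
    (homt₁ : ∀ h : H, omt h ∈ V.dualAnnihilator)
    (homt₂ : ∀ h h' : H, omt h (h' : W) = ω h h')
    -- `π# : H⁰ → V`, determined by `η(π#(ξ)) = π(η,ξ)` for all `η ∈ H⁰`:
    (pish : H.dualAnnihilator →ₗ[ℝ] W)
    (hpish₁ : ∀ ξ : H.dualAnnihilator, pish ξ ∈ V)
    (hpish₂ : ∀ η ξ : H.dualAnnihilator, (η : Module.Dual ℝ W) (pish ξ) = π η ξ)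
    (L : Submodule ℝ (W × Module.Dual ℝ W))
    (hL : ∀ p, p ∈ L ↔ ∃ (h : H) (ξ : H.dualAnnihilator),
        p = ((h : W) + pish ξ, omt h + (ξ : Module.Dual ℝ W))) :
    (∀ p ∈ L, ∀ q ∈ L, pairPlus p q = 0) ∧
    Module.finrank ℝ L = Module.finrank ℝ W ∧
    V.prod V.dualAnnihilator ⊓ L = ⊥ ∧
    horizontalSpace L V = H ∧
    (∀ h₁ h₂ : H, ∀ α ∈ V.dualAnnihilator, ((h₁ : W), α) ∈ L → α (h₂ : W) = ω h₁ h₂) ∧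
    (∀ ξ₁ ξ₂ : H.dualAnnihilator, ∀ w ∈ V, (w, (ξ₂ : Module.Dual ℝ W)) ∈ L →
        (ξ₁ : Module.Dual ℝ W) w = π ξ₁ ξ₂) := by
  obtain rfl : L = LinearMap.range (graphParam omt pish) :=
    Submodule.ext fun p => (hL p).trans (mem_range_graphParam_iff omt pish p).symm
  refine ⟨pairPlus_eq_zero_of_mem_range_graphParam hω hπ homt₁ homt₂ hpish₁ hpish₂,
    finrank_range_graphParam hVH homt₁ hpish₁,
    prod_dualAnnihilator_inf_range_graphParam hVH homt₁ hpish₁,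
    horizontalSpace_range_graphParam hVH homt₁, ?_, ?_⟩
  · intro h₁ h₂ α hα hmem
    obtain ⟨h, hh, rfl⟩ := exists_eq_omt_of_mem_range_graphParam
      (disjoint_dualAnnihilator_of_codisjoint hVH.codisjoint) homt₁ hmem hα
    rw [Subtype.ext hh, homt₂]
  · intro ξ₁ ξ₂ w hw hmem
    obtain ⟨ξ, rfl, hξ⟩ := exists_eq_pish_of_mem_range_graphParam hVH.disjoint hpish₁ hmem hw
    rw [Subtype.ext hξ, hpish₂]
end

section
/- Let W be a finite-dimensional real vector space, Π : W* × W* → ℝ an alternating bilinear form on the dual, and Π# : W* → W the linear map determined by ξ(Π#(η)) = Π(ξ,η) for all ξ, η ∈ W* (using the canonical identification of W with its double dual). Let L_Π = {(Π#(ξ), ξ) : ξ ∈ W*} be the graph of Π. For a subspace V ⊆ W, one has (V × V⁰) ∩ L_Π = {0} if and only if the restriction of Π to V⁰ × V⁰ is non-degenerate. -/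
/-!
A point of `V × V⁰` on the graph of `Π#` is `(Π#ξ, ξ)` with `ξ ∈ V⁰` and `Π#ξ ∈ V`. Since `V` is
the common kernel of `V⁰`, the condition `Π#ξ ∈ V` says `η(Π#ξ) = Π(η, ξ) = 0` for all `η ∈ V⁰`,
i.e. (by skew-symmetry) that `ξ` lies in the radical of `Π` restricted to `V⁰`.
-/

theorem Submodule.prod_inf_range_prod_id_eq_bot_iff {R M N : Type*} [Ring R] [AddCommGroup M]
    [Module R M] [AddCommGroup N] [Module R N] (f : N →ₗ[R] M) (p : Submodule R M)
    (q : Submodule R N) :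
    p.prod q ⊓ LinearMap.range (f.prod LinearMap.id) = ⊥ ↔ ∀ x ∈ q, f x ∈ p → x = 0 := by
  constructor
  · intro h x hx hfx
    have hmem : (f x, x) ∈ p.prod q ⊓ LinearMap.range (f.prod LinearMap.id) :=
      ⟨⟨hfx, hx⟩, x, rfl⟩
    rw [h, Submodule.mem_bot] at hmem
    exact congrArg Prod.snd hmem
  · rintro h
    rw [eq_bot_iff]
    rintro _ ⟨⟨hfx, hx⟩, x, rfl⟩
    have hx0 : x = 0 := h x hx hfx
    simp [hx0]

theorem LinearMap.IsAlt.apply_mem_iff_forall_mem_dualAnnihilator {K W : Type*} [Field K]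
    [AddCommGroup W] [Module K W] {B : Module.Dual K W →ₗ[K] Module.Dual K W →ₗ[K] K}
    (hB : B.IsAlt) {f : Module.Dual K W →ₗ[K] W} (hf : ∀ ξ η, ξ (f η) = B ξ η)
    (V : Submodule K W) (ξ : Module.Dual K W) :
    f ξ ∈ V ↔ ∀ η ∈ V.dualAnnihilator, B ξ η = 0 := by
  rw [← Subspace.forall_mem_dualAnnihilator_apply_eq_zero_iff]
  exact forall₂_congr fun η _ ↦ by rw [hf, hB.eq_iff]

theorem stmt17_general {W : Type*} [AddCommGroup W] [Module ℝ W]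
    (Pb : Module.Dual ℝ W →ₗ[ℝ] Module.Dual ℝ W →ₗ[ℝ] ℝ) (hPb : ∀ ξ, Pb ξ ξ = 0)
    (Pbs : Module.Dual ℝ W →ₗ[ℝ] W) (hPbs : ∀ ξ η, ξ (Pbs η) = Pb ξ η)
    (V : Submodule ℝ W) :
    V.prod V.dualAnnihilator ⊓ LinearMap.range (LinearMap.prod Pbs LinearMap.id) = ⊥ ↔
      ∀ ξ ∈ V.dualAnnihilator, ξ ≠ 0 → ∃ η ∈ V.dualAnnihilator, Pb ξ η ≠ 0 := by
  rw [Submodule.prod_inf_range_prod_id_eq_bot_iff]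
  refine forall₂_congr fun ξ _ ↦ ?_
  rw [LinearMap.IsAlt.apply_mem_iff_forall_mem_dualAnnihilator hPb hPbs, not_imp_comm]
  push Not
  rfl

/-- for an alternating bilinear form `Pb` on `W*` with
`ξ(Pbs(η)) = Pb(ξ,η)` and graph `L_Π = {(Pbs(ξ), ξ)}`, one has
`(V × V⁰) ∩ L_Π = {0}` iff the restriction of `Pb` to `V⁰ × V⁰` is non-degenerate. -/
theorem stmt17 {W : Type*} [AddCommGroup W] [Module ℝ W] [FiniteDimensional ℝ W]
    (Pb : Module.Dual ℝ W →ₗ[ℝ] Module.Dual ℝ W →ₗ[ℝ] ℝ) (hPb : ∀ ξ, Pb ξ ξ = 0)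
    (Pbs : Module.Dual ℝ W →ₗ[ℝ] W) (hPbs : ∀ ξ η, ξ (Pbs η) = Pb ξ η)
    (V : Submodule ℝ W) :
    V.prod V.dualAnnihilator ⊓ LinearMap.range (LinearMap.prod Pbs LinearMap.id) = ⊥ ↔
      ∀ ξ ∈ V.dualAnnihilator, ξ ≠ 0 → ∃ η ∈ V.dualAnnihilator, Pb ξ η ≠ 0 :=
  stmt17_general Pb hPb Pbs hPbs V
end

section
/- Let W be a finite-dimensional real vector space, Π : W* × W* → ℝ an alternating bilinear form on the dual, Π# : W* → W the linear map determined by ξ(Π#(η)) = Π(ξ,η) for all ξ, η ∈ W*, and L_Π = {(Π#(ξ), ξ) : ξ ∈ W*} its graph. Let V ⊆ W be a subspace such that the restriction of Π to V⁰ × V⁰ is non-degenerate. Then W is the internal direct sum of V and Π#(V⁰), the horizontal space {w ∈ W : there exists α ∈ V⁰ with (w,α) ∈ L_Π} of L_Π equals Π#(V⁰), and the induced horizontal 2-form ω of L_Π (defined on the horizontal space by ω(w₁,w₂) = α_{w₁}(w₂), where α_w is the unique element of V⁰ with (w,α_w) ∈ L_Π) satisfies ω(Π#(α), Π#(β)) =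 Π(α,β) for all α, β ∈ V⁰. -/
/-- if the restriction of `Pb` to `V⁰ × V⁰` is non-degenerate, then
`W = V ⊕ Pbs(V⁰)`, the horizontal space of the graph `L_Π` equals `Pbs(V⁰)`, and the
induced horizontal 2-form satisfies `ω(Pbs(α), Pbs(β)) = Pb(α,β)` for `α, β ∈ V⁰`. -/
theorem stmt18 {W : Type*} [AddCommGroup W] [Module ℝ W] [FiniteDimensional ℝ W]
    (Pb : Module.Dual ℝ W →ₗ[ℝ] Module.Dual ℝ W →ₗ[ℝ] ℝ) (hPb : ∀ ξ, Pb ξ ξ = 0)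
    (Pbs : Module.Dual ℝ W →ₗ[ℝ] W) (hPbs : ∀ ξ η, ξ (Pbs η) = Pb ξ η)
    (V : Submodule ℝ W)
    (hnd : ∀ ξ ∈ V.dualAnnihilator, ξ ≠ 0 → ∃ η ∈ V.dualAnnihilator, Pb ξ η ≠ 0) :
    IsCompl V (V.dualAnnihilator.map Pbs) ∧
    horizontalSpace (LinearMap.range (LinearMap.prod Pbs LinearMap.id)) V
      = V.dualAnnihilator.map Pbs ∧
    (∀ α ∈ V.dualAnnihilator, ∀ β ∈ V.dualAnnihilator, ∀ γ ∈ V.dualAnnihilator,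
      (Pbs α, γ) ∈ LinearMap.range (LinearMap.prod Pbs LinearMap.id) →
        γ (Pbs β) = Pb α β) := by
  have skew : ∀ ξ η, Pb ξ η = - Pb η ξ := by
    intro ξ η
    have h := hPb (ξ + η)
    simp only [map_add, LinearMap.add_apply, hPb] at h
    linarith
  set A := V.dualAnnihilator with hA
  -- injectivity of Pbs on A
  have hinj : ∀ α ∈ A, Pbs α = 0 → α = 0 := by
    intro α hα h0
    by_contra hne
    obtain ⟨η, hη, hne'⟩ := hnd α hα hne
    apply hne'
    rw [skew, ← hPbs, h0, map_zero, neg_zero]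
  -- disjointness
  have hdisj : Disjoint V (A.map Pbs) := by
    rw [Submodule.disjoint_def]
    rintro w hwV ⟨α, hα, rfl⟩
    have hα0 : α = 0 := by
      by_contra hne
      obtain ⟨η, hη, hne'⟩ := hnd α hα hne
      apply hne'
      rw [skew, ← hPbs, (Submodule.mem_dualAnnihilator η).mp hη _ hwV, neg_zero]
    rw [hα0, map_zero]
  -- dimension count
  have hker : LinearMap.ker (Pbs.domRestrict A) = ⊥ := by
    rw [LinearMap.ker_eq_bot']
    rintro ⟨α, hα⟩ h0
    exact Subtype.ext (hinj α hα h0)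
  have hrange : LinearMap.range (Pbs.domRestrict A) = A.map Pbs := by
    ext w
    simp [LinearMap.mem_range, Submodule.mem_map]
  have hfr : Module.finrank ℝ (A.map Pbs) = Module.finrank ℝ A := by
    rw [← hrange]
    haveI : FiniteDimensional ℝ A := by
      have : FiniteDimensional ℝ (Module.Dual ℝ W) := inferInstance
      infer_instance
    have := LinearMap.finrank_range_add_finrank_ker (K := ℝ) (V := A) (V₂ := W) (Pbs.domRestrict A)
    rw [hker, finrank_bot ℝ A] at this
    omega
  have hAfr : Module.finrank ℝ V + Module.finrank ℝ A =
      Module.finrank ℝ W := by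
    have e : Module.finrank ℝ (W ⧸ V) = Module.finrank ℝ A :=
      (Subspace.quotEquivAnnihilator V).finrank_eq
    have q := Submodule.finrank_quotient_add_finrank V
    omega
  have hcompl : IsCompl V (A.map Pbs) := by
    refine ⟨hdisj, ?_⟩
    rw [codisjoint_iff]
    apply Submodule.eq_top_of_finrank_eq
    have h2 := Submodule.finrank_sup_add_finrank_inf_eq V (A.map Pbs)
    rw [hdisj.eq_bot, finrank_bot ℝ W] at h2
    omega
  refine ⟨hcompl, ?_, ?_⟩
  · ext w
    constructor
    · rintro ⟨ξ, hξ, ⟨η, hη⟩⟩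
      have h1 : Pbs η = w := congrArg Prod.fst hη
      have h2 : η = ξ := congrArg Prod.snd hη
      exact ⟨ξ, hξ, by rw [← h2, h1]⟩
    · rintro ⟨α, hα, rfl⟩
      exact ⟨α, hα, ⟨α, rfl⟩⟩
  · intro α hα β hβ γ hγ ⟨η, hη⟩
    have h1 : Pbs η = Pbs α := congrArg Prod.fst hη
    have h2 : η = γ := congrArg Prod.snd hη
    have hαγ : α = γ := by
      have : Pbs (α - γ) = 0 := by rw [map_sub, ← h2, h1, sub_self]
      exact sub_eq_zero.mp (hinj (α - γ) (sub_mem hα hγ) this)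
    rw [← hαγ, hPbs]
end
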